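/- arXiv:2106.04877 — 3 statements merged into one kernel-verified Lean document; each statement's English description precedes it below -/
import Mathlib

section
/- For every nonnegative integer α, the half-space integral satisfies S(α, α+1) = (√(2π)/2)·(α+1)!, and for every integer α ≥ 1, S(α, α−1) = (√(2π)/2)·α!. -/
/-!
Since `He_{n+1} e^{-x²/2} = -(He_n e^{-x²/2})'`, integrating by parts `n` times gives
`∫ p He_n e^{-x²/2} = ∫ p⁽ⁿ⁾ e^{-x²/2}` over the whole line for every polynomial `p`. With
`p = X He_α`, monic of degree `α + 1`, this yields `∫ x He_α He_{α+1} e^{-x²/2} = √(2π) (α+1)!`.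
The integrand is even because `He_n(-x) = (-1)ⁿ He_n(x)`, so the half-line integral is half of it;
the second identity is the first one with the roles of the two indices exchanged.
-/

open MeasureTheory Real

/-- The probabilist's Hermite polynomial evaluated at a real number. -/
noncomputable def He (n : ℕ) (x : ℝ) : ℝ := Polynomial.aeval x (Polynomial.hermite n)

/-- The half-space Hermite-Gaussian integral `S(α,β)`. -/
noncomputable def S (a b : ℕ) : ℝ :=
  ∫ x in Set.Iic (0 : ℝ), x * He a x * He b x * Real.exp (-x ^ 2 / 2)

open Polynomial Set

theorem Polynomial.iterate_derivative_natDegree {R : Type*} [CommSemiring R] (p : R[X]) :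
    derivative^[p.natDegree] p = C ((p.natDegree.factorial : R) * p.leadingCoeff) := by
  have hdeg : (derivative^[p.natDegree] p).natDegree = 0 := by
    have := natDegree_iterate_derivative p p.natDegree
    omega
  rw [eq_C_of_natDegree_eq_zero hdeg, coeff_iterate_derivative, zero_add,
    Nat.descFactorial_self, nsmul_eq_mul, leadingCoeff]

theorem integral_Iic_zero_eq_half_integral_of_even {f : ℝ → ℝ} (hf : Integrable f)
    (heven : ∀ x, f (-x) = f x) :
    ∫ x in Iic 0, f x = (∫ x, f x) / 2 := by
  have hreflect : ∫ x in Iic 0, f x = ∫ x in Ioi 0, f x := by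
    simpa only [heven, neg_zero] using integral_comp_neg_Iic 0 f
  have hsplit := intervalIntegral.integral_Iic_add_Ioi (b := 0) hf.integrableOn hf.integrableOn
  linarith

theorem integral_exp_neg_sq_div_two : ∫ x : ℝ, rexp (-(x ^ 2 / 2)) = √(2 * π) := by
  have h := integral_gaussian (1 / 2)
  rw [show π / (1 / 2) = 2 * π by ring] at h
  simpa only [neg_mul, one_div, inv_mul_eq_div] using h

/- `He n x * exp (-x ^ 2 / 2) = (-1) ^ n * deriv^[n] (exp (-· ^ 2 / 2)) x`, and the `n`-th derivative
of an even function has parity `(-1) ^ n`. -/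
theorem He_neg (n : ℕ) (x : ℝ) : He n (-x) = (-1) ^ n * He n x := by
  have hD := iteratedDeriv_comp_neg n (fun y => rexp (-(y ^ 2 / 2))) x
  simp only [neg_sq, iteratedDeriv_eq_iterate, smul_eq_mul] at hD
  simp only [He, hermite_eq_deriv_gaussian, hD, neg_sq]
  have hsq : ((-1 : ℝ) ^ n) ^ 2 = 1 := by rw [pow_right_comm, neg_one_sq, one_pow]
  linear_combination (-(-1) ^ n * deriv^[n] (fun y => rexp (-(y ^ 2 / 2))) (-x)
    / rexp (-(x ^ 2 / 2))) * hsq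

theorem hasDerivAt_neg_He_mul_exp (n : ℕ) (x : ℝ) :
    HasDerivAt (fun y => -(He n y * rexp (-(y ^ 2 / 2))))
      (He (n + 1) x * rexp (-(x ^ 2 / 2))) x := by
  have hexp : HasDerivAt (fun y => rexp (-(y ^ 2 / 2))) (-x * rexp (-(x ^ 2 / 2))) x := by
    simpa [mul_comm] using ((hasDerivAt_pow 2 x).div_const 2).neg.exp
  refine (((hermite n).hasDerivAt_aeval x).fun_mul hexp).fun_neg.congr_deriv ?_
  simp only [He, hermite_succ, map_sub, map_mul, aeval_X]
  ring

section IntegrationByParts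

variable {R : Type*} [CommSemiring R] [Algebra R ℝ]

theorem integrable_aeval_mul_exp_neg_sq_div_two (p : R[X]) :
    Integrable fun x : ℝ => aeval x p * rexp (-(x ^ 2 / 2)) := by
  induction p using Polynomial.induction_on' with
  | add p q hp hq =>
    simp only [map_add, add_mul]
    exact hp.add hq
  | monomial k a =>
    have h := integrable_rpow_mul_exp_neg_mul_sq (b := 1 / 2) (by norm_num)
      (s := k) (by linarith [(Nat.cast_nonneg k : (0 : ℝ) ≤ k)])
    simp only [rpow_natCast] at h
    convert h.const_mul (algebraMap R ℝ a) using 2 with x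
    rw [aeval_monomial]
    ring_nf

theorem integrable_aeval_mul_He_mul_exp (p : R[X]) (n : ℕ) :
    Integrable fun x : ℝ => aeval x p * (He n x * rexp (-(x ^ 2 / 2))) := by
  refine (integrable_aeval_mul_exp_neg_sq_div_two
    (p.map (algebraMap R ℝ) * (hermite n).map (algebraMap ℤ ℝ))).congr (.of_forall fun x => ?_)
  simp only [He, map_mul, aeval_map_algebraMap, mul_assoc]

theorem integral_aeval_mul_He_succ_mul_exp (p : R[X]) (n : ℕ) :
    ∫ x : ℝ, aeval x p * (He (n + 1) x * rexp (-(x ^ 2 / 2))) =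
      ∫ x : ℝ, aeval x (derivative p) * (He n x * rexp (-(x ^ 2 / 2))) := by
  have hneg (q : R[X]) : Integrable fun x : ℝ => aeval x q * -(He n x * rexp (-(x ^ 2 / 2))) := by
    simpa only [mul_neg] using (integrable_aeval_mul_He_mul_exp q n).fun_neg
  rw [integral_mul_deriv_eq_deriv_mul_of_integrable (fun x _ => p.hasDerivAt_aeval x)
    (fun x _ => hasDerivAt_neg_He_mul_exp n x) (integrable_aeval_mul_He_mul_exp p (n + 1))
    (hneg (derivative p)) (hneg p), ← integral_neg]
  simp only [mul_neg, neg_neg]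

theorem integral_aeval_mul_He_mul_exp (p : R[X]) (n : ℕ) :
    ∫ x : ℝ, aeval x p * (He n x * rexp (-(x ^ 2 / 2))) =
      ∫ x : ℝ, aeval x (derivative^[n] p) * rexp (-(x ^ 2 / 2)) := by
  induction n generalizing p with
  | zero => simp [He]
  | succ n ih =>
    rw [integral_aeval_mul_He_succ_mul_exp, ih, Function.iterate_succ_apply]

end IntegrationByParts

theorem integral_mul_He_mul_He_succ_mul_exp (m : ℕ) :
    ∫ x : ℝ, x * He m x * He (m + 1) x * rexp (-(x ^ 2 / 2)) = √(2 * π) * (m + 1).factorial := by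
  have hmonic : (X * hermite m).Monic := monic_X.mul (hermite_monic m)
  have hdeg : (X * hermite m).natDegree = m + 1 := by
    rw [monic_X.natDegree_mul (hermite_monic m), natDegree_X, natDegree_hermite, add_comm]
  have hderiv : derivative^[m + 1] (X * hermite m) = C ((m + 1).factorial : ℤ) := by
    have h := iterate_derivative_natDegree (X * hermite m)
    rwa [hmonic.leadingCoeff, mul_one, hdeg] at h
  calc ∫ x : ℝ, x * He m x * He (m + 1) x * rexp (-(x ^ 2 / 2))
      = ∫ x : ℝ, aeval x (X * hermite m) * (He (m + 1) x * rexp (-(x ^ 2 / 2))) := by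
        simp only [He, map_mul, aeval_X, mul_assoc]
    _ = ∫ x : ℝ, ((m + 1).factorial : ℝ) * rexp (-(x ^ 2 / 2)) := by
        rw [integral_aeval_mul_He_mul_exp, hderiv]
        simp
    _ = √(2 * π) * (m + 1).factorial := by
        rw [integral_const_mul, integral_exp_neg_sq_div_two, mul_comm]

theorem S_comm (a b : ℕ) : S a b = S b a := by
  simp only [S, mul_right_comm _ (He a _)]

theorem S_self_succ (m : ℕ) : S m (m + 1) = √(2 * π) / 2 * (m + 1).factorial := by
  have hint : Integrable fun x : ℝ => x * He m x * He (m + 1) x * rexp (-(x ^ 2 / 2)) := by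
    refine (integrable_aeval_mul_He_mul_exp (X * hermite m : ℤ[X]) (m + 1)).congr
      (.of_forall fun x => ?_)
    simp only [He, map_mul, aeval_X, mul_assoc]
  have heven (x : ℝ) : -x * He m (-x) * He (m + 1) (-x) * rexp (-((-x) ^ 2 / 2)) =
      x * He m x * He (m + 1) x * rexp (-(x ^ 2 / 2)) := by
    have hsq : ((-1 : ℝ) ^ m) ^ 2 = 1 := by rw [pow_right_comm, neg_one_sq, one_pow]
    rw [He_neg, He_neg, neg_sq]
    linear_combination (x * He m x * He (m + 1) x * rexp (-(x ^ 2 / 2))) * hsq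
  simp only [S, neg_div]
  rw [integral_Iic_zero_eq_half_integral_of_even hint heven, integral_mul_He_mul_He_succ_mul_exp]
  ring

theorem S_succ_and_pred :
    (∀ α : ℕ, S α (α + 1) = Real.sqrt (2 * π) / 2 * (α + 1).factorial) ∧
    (∀ α : ℕ, 1 ≤ α → S α (α - 1) = Real.sqrt (2 * π) / 2 * α.factorial) := by
  refine ⟨S_self_succ, fun α hα => ?_⟩
  obtain ⟨m, rfl⟩ := Nat.exists_eq_add_of_le' hα
  rw [Nat.add_sub_cancel, S_comm, S_self_succ]
end

section
/- If α is an even nonnegative integer, β is an odd nonnegative integer, and |β − α| ≠ 1, then S(α,β) = 0. -/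
open MeasureTheory Real

open Polynomial Set

theorem Polynomial.derivative_hermite_succ (n : ℕ) :
    derivative (hermite (n + 1)) = (n + 1 : ℤ[X]) * hermite n := by
  induction n with
  | zero => simp
  | succ n ih =>
    rw [hermite_succ (n + 1), derivative_sub, derivative_mul, derivative_X, ih, hermite_succ n,
      derivative_mul, derivative_add, derivative_natCast, derivative_one]
    push_cast
    ring

lemma hasDerivAt_He (n : ℕ) (x : ℝ) : HasDerivAt (He n) (n * He (n - 1) x) x := by
  have h : HasDerivAt (He n) (aeval x (derivative (hermite n))) x :=
    (hermite n).hasDerivAt_aeval x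
  convert h using 1
  cases n with
  | zero => simp
  | succ n => simp [He, -hermite_succ, derivative_hermite_succ]

lemma He_succ (n : ℕ) (x : ℝ) : He (n + 1) x = x * He n x - n * He (n - 1) x := by
  rw [← (hasDerivAt_He n x).deriv, He, hermite_succ, map_sub, map_mul, aeval_X,
    ← Polynomial.deriv_aeval]
  rfl

lemma He_zero_eq_zero_of_odd {n : ℕ} (hn : Odd n) : He n 0 = 0 := by
  rw [He, ← coeff_zero_eq_aeval_zero', coeff_hermite_of_odd_add (by simpa using hn), map_zero]

lemma integrable_aeval_mul_exp_neg_mul_sq {R : Type*} [CommSemiring R] [Algebra R ℝ] (p : R[X])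
    {b : ℝ} (hb : 0 < b) : Integrable fun x : ℝ => aeval x p * exp (-b * x ^ 2) := by
  simp_rw [aeval_def, eval₂_eq_eval_map, eval_eq_sum_range, Finset.sum_mul, mul_assoc]
  refine integrable_finsetSum _ fun i _ => Integrable.const_mul ?_ _
  have hi : (-1 : ℝ) < i := neg_one_lt_zero.trans_le i.cast_nonneg
  simpa using integrable_rpow_mul_exp_neg_mul_sq hb hi

lemma integrable_He_mul_He_mul_exp (m n : ℕ) :
    Integrable fun x => He m x * He n x * exp (-x ^ 2 / 2) := by
  refine (integrable_aeval_mul_exp_neg_mul_sq (hermite m * hermite n) (b := 1 / 2)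
    (by norm_num)).congr (ae_of_all _ fun x => ?_)
  simp only [He, map_mul]
  ring_nf

lemma hasDerivAt_He_mul_exp (n : ℕ) (x : ℝ) :
    HasDerivAt (fun y => He n y * exp (-y ^ 2 / 2)) (-(He (n + 1) x * exp (-x ^ 2 / 2))) x := by
  have hexp : HasDerivAt (fun y => exp (-y ^ 2 / 2)) (-x * exp (-x ^ 2 / 2)) x := by
    have hsq : HasDerivAt (fun y => -y ^ 2 / 2) (-(2 * x) / 2) x := by
      simpa using (hasDerivAt_pow 2 x).neg.div_const 2
    exact hsq.exp.congr_deriv (by ring)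
  refine ((hasDerivAt_He n x).mul hexp).congr_deriv ?_
  rw [He_succ]
  ring

noncomputable def hermiteInnerIic (m n : ℕ) : ℝ :=
  ∫ x in Iic 0, He m x * He n x * exp (-x ^ 2 / 2)

lemma hermiteInnerIic_comm (m n : ℕ) : hermiteInnerIic m n = hermiteInnerIic n m := by
  simp only [hermiteInnerIic, mul_comm (He m _)]

lemma hermiteInnerIic_succ (m n : ℕ) :
    hermiteInnerIic m (n + 1) = m * hermiteInnerIic (m - 1) n - He m 0 * He n 0 := by
  set F := fun y => He m y * (He n y * exp (-y ^ 2 / 2))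
  set F' := fun x => m * (He (m - 1) x * He n x * exp (-x ^ 2 / 2)) -
    He m x * He (n + 1) x * exp (-x ^ 2 / 2)
  have hF : ∀ x ∈ Iic (0 : ℝ), HasDerivAt F (F' x) x := fun x _ => by
    refine ((hasDerivAt_He m x).mul (hasDerivAt_He_mul_exp n x)).congr_deriv ?_
    ring
  have hF'int : Integrable F' :=
    ((integrable_He_mul_He_mul_exp _ _).const_mul _).sub (integrable_He_mul_He_mul_exp _ _)
  have hFint : Integrable F := by
    simpa only [F, mul_assoc] using integrable_He_mul_He_mul_exp m n
  have hFTC := integral_Iic_of_hasDerivAt_of_tendsto' hF hF'int.integrableOn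
    (tendsto_zero_of_hasDerivAt_of_integrableOn_Iic hF hF'int.integrableOn hFint.integrableOn)
  rw [integral_sub ((integrable_He_mul_He_mul_exp _ _).const_mul _).integrableOn
    (integrable_He_mul_He_mul_exp _ _).integrableOn, integral_const_mul] at hFTC
  have hF0 : F 0 = He m 0 * He n 0 := by simp [F]
  rw [hF0, sub_zero] at hFTC
  unfold hermiteInnerIic
  linarith

lemma hermiteInnerIic_eq_zero {m n : ℕ} (hmn : Even (m + n)) (hne : m ≠ n) :
    hermiteInnerIic m n = 0 := by
  induction n generalizing m with
  | zero =>
    obtain ⟨k, rfl⟩ := Nat.exists_eq_succ_of_ne_zero hne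
    have hk : Odd k := by simpa [Nat.even_add_one] using hmn
    simp [hermiteInnerIic_comm, hermiteInnerIic_succ, He_zero_eq_zero_of_odd hk]
  | succ n ih =>
    have hboundary : He m 0 * He n 0 = 0 := by
      rcases Nat.even_or_odd m with hm | hm
      · have hn : Odd n := by
          simpa [← add_assoc, Nat.even_add_one, Nat.even_add, hm] using hmn
        rw [He_zero_eq_zero_of_odd hn, mul_zero]
      · rw [He_zero_eq_zero_of_odd hm, zero_mul]
    rw [hermiteInnerIic_succ, hboundary, sub_zero]
    rcases m with _ | k
    · rw [Nat.cast_zero, zero_mul]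
    · have hkn : Even (k + n) := by
        rw [show k + n = k + 1 + (n + 1) - 2 by omega]
        exact hmn.tsub even_two
      rw [Nat.add_sub_cancel, ih hkn (by omega), mul_zero]

lemma S_eq_hermiteInnerIic (a b : ℕ) :
    S a b = hermiteInnerIic a (b + 1) + b * hermiteInnerIic a (b - 1) := by
  have hx : ∀ x, x * He a x * He b x * exp (-x ^ 2 / 2) =
      He a x * He (b + 1) x * exp (-x ^ 2 / 2) + b * (He a x * He (b - 1) x * exp (-x ^ 2 / 2)) :=
    fun x => by rw [He_succ]; ring
  simp only [S, hx, hermiteInnerIic]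
  rw [integral_add (integrable_He_mul_He_mul_exp _ _).integrableOn
    ((integrable_He_mul_He_mul_exp _ _).const_mul _).integrableOn, integral_const_mul]

theorem S_eq_zero_of_even_odd (α β : ℕ) (hα : Even α) (hβ : Odd β)
    (h : |(β : ℤ) - (α : ℤ)| ≠ 1) : S α β = 0 := by
  have hne_succ : α ≠ β + 1 := by rintro rfl; norm_num at h
  have hne_pred : α ≠ β - 1 := by
    have := hβ.pos
    rintro rfl
    norm_num [Nat.cast_sub this] at h
  have heven_succ : Even (α + (β + 1)) := add_assoc α β 1 ▸ (hα.add_odd hβ).add_one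
  have heven_pred : Even (α + (β - 1)) := hα.add (Nat.Odd.sub_odd hβ odd_one)
  rw [S_eq_hermiteInnerIic, hermiteInnerIic_eq_zero heven_succ hne_succ,
    hermiteInnerIic_eq_zero heven_pred hne_pred, mul_zero, add_zero]
end

section
/- Let A ∈ ℝ^{n×m} with n ≥ m and rank A = m. Then there exist matrices R_even ∈ ℝ^{n×m}, R_odd ∈ ℝ^{m×m}, R_0 ∈ ℝ^{n×(n−m)}, and a diagonal matrix Λ₊ ∈ ℝ^{m×m} with strictly positive diagonal entries, such that the block matrix R = [[R_even, R_0, R_even],[R_odd, 0, −R_odd]] ∈ ℝ^{(n+m)×(n+m)} is orthogonal (RᵀR = I) and M(A)·R = R·Λ where Λ = diag(Λ₊, 0_{n−m}, −Λ₊). -/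
/-!
Write `Aᵀ A U = U Λ²` with `U` orthogonal. Full column rank makes `Aᵀ A` positive definite, so
`Λ` has positive diagonal and `V := A U Λ⁻¹` has orthonormal columns with `A U = V Λ` and
`Aᵀ V = U Λ`. Hence the columns of `[V; U] / √2` and `[V; -U] / √2` are orthonormal
eigenvectors of `M(A)` for `Λ` and `-Λ`. The kernel eigenvectors are `[N; 0]` for an orthonormal
basis `N` of `ker Aᵀ`, which is orthogonal to the columns of `V` since these lie in `range A`.
-/

open Matrix

/-- The symmetric block matrix `M(A) = [[0, A],[Aᵀ, 0]]`. -/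
def MA {n m : ℕ} (A : Matrix (Fin n) (Fin m) ℝ) :
    Matrix (Fin n ⊕ Fin m) (Fin n ⊕ Fin m) ℝ :=
  Matrix.fromBlocks 0 A Aᵀ 0

namespace Matrix

theorem mulVec_injective_of_rank_eq_card {K ι κ : Type*} [Field K] [Fintype κ]
    {A : Matrix ι κ K} (hA : A.rank = Fintype.card κ) : Function.Injective A.mulVec := by
  rw [mulVec_injective_iff, linearIndependent_iff_card_eq_finrank_span, Set.finrank,
    ← rank_eq_finrank_span_cols, hA]

section Spectral

variable {κ : Type*} [Fintype κ] [DecidableEq κ] {S : Matrix κ κ ℝ}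

theorem IsHermitian.mul_eigenvectorUnitary_real (hS : S.IsHermitian) :
    S * (hS.eigenvectorUnitary : Matrix κ κ ℝ) =
      (hS.eigenvectorUnitary : Matrix κ κ ℝ) * diagonal hS.eigenvalues := by
  have h := hS.spectral_theorem
  rw [Unitary.conjStarAlgAut_apply, RCLike.ofReal_real_eq_id, Function.id_comp] at h
  calc S * (hS.eigenvectorUnitary : Matrix κ κ ℝ)
      = _ * (hS.eigenvectorUnitary : Matrix κ κ ℝ) := congrArg (· * _) h
    _ = _ := by simp [mul_assoc]

theorem IsHermitian.transpose_eigenvectorUnitary_mul_self (hS : S.IsHermitian) :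
    (hS.eigenvectorUnitary : Matrix κ κ ℝ)ᵀ * hS.eigenvectorUnitary = 1 := by
  simpa [star_eq_conjTranspose] using Unitary.coe_star_mul_self hS.eigenvectorUnitary

end Spectral

theorem exists_svd_of_rank_eq_card {ι κ : Type*} [Fintype ι] [Fintype κ] [DecidableEq κ]
    {A : Matrix ι κ ℝ} (hA : A.rank = Fintype.card κ) :
    ∃ (V : Matrix ι κ ℝ) (U : Matrix κ κ ℝ) (d : κ → ℝ), (∀ i, 0 < d i) ∧
      Vᵀ * V = 1 ∧ Uᵀ * U = 1 ∧ A * U = V * diagonal d ∧ Aᵀ * V = U * diagonal d := by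
  have hPD : (Aᵀ * A).PosDef := by
    simpa using PosDef.conjTranspose_mul_self A (mulVec_injective_of_rank_eq_card hA)
  set U : Matrix κ κ ℝ := ↑hPD.isHermitian.eigenvectorUnitary
  set μ := hPD.isHermitian.eigenvalues
  have hμ : ∀ i, 0 < μ i := hPD.eigenvalues_pos
  set d : κ → ℝ := fun i => √(μ i)
  have hd : ∀ i, 0 < d i := fun i => Real.sqrt_pos.2 (hμ i)
  have hUU : Uᵀ * U = 1 := hPD.isHermitian.transpose_eigenvectorUnitary_mul_self
  have hAAU : Aᵀ * A * U = U * diagonal μ := hPD.isHermitian.mul_eigenvectorUnitary_real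
  have hdd : diagonal d * diagonal d = diagonal μ := by
    simp [d, diagonal_mul_diagonal, Real.mul_self_sqrt (hμ _).le]
  have hdinv : diagonal d⁻¹ * diagonal d = 1 := by
    simp [diagonal_mul_diagonal, inv_mul_cancel₀ (hd _).ne']
  have hdinv' : diagonal d * diagonal d⁻¹ = 1 := by
    simp [diagonal_mul_diagonal, mul_inv_cancel₀ (hd _).ne']
  refine ⟨A * U * diagonal d⁻¹, U, d, hd, ?_, hUU, ?_, ?_⟩
  · calc (A * U * diagonal d⁻¹)ᵀ * (A * U * diagonal d⁻¹)
        = diagonal d⁻¹ * (Uᵀ * (Aᵀ * A * U)) * diagonal d⁻¹ := by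
          simp only [transpose_mul, diagonal_transpose, Matrix.mul_assoc]
      _ = (diagonal d⁻¹ * diagonal d) * (diagonal d * diagonal d⁻¹) := by
          rw [hAAU, ← hdd, ← Matrix.mul_assoc Uᵀ, hUU, Matrix.one_mul]
          simp only [Matrix.mul_assoc]
      _ = 1 := by rw [hdinv, hdinv', Matrix.mul_one]
  · rw [Matrix.mul_assoc, hdinv, Matrix.mul_one]
  · calc Aᵀ * (A * U * diagonal d⁻¹) = Aᵀ * A * U * diagonal d⁻¹ := by
          simp only [Matrix.mul_assoc]
      _ = U * diagonal d * (diagonal d * diagonal d⁻¹) := by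
          rw [hAAU, ← hdd]; simp only [Matrix.mul_assoc]
      _ = U * diagonal d := by rw [hdinv', Matrix.mul_one]

theorem transpose_mul_eq_zero_of_mul_eq_mul_diagonal {ι κ ν : Type*} [Fintype ι] [Fintype κ]
    [DecidableEq κ] {A V : Matrix ι κ ℝ} {U : Matrix κ κ ℝ} {d : κ → ℝ} (hd : ∀ i, d i ≠ 0)
    (hAU : A * U = V * diagonal d) {W : Matrix ι ν ℝ} (hW : Aᵀ * W = 0) : Vᵀ * W = 0 := by
  have h : diagonal d * (Vᵀ * W) = 0 := by
    rw [← Matrix.mul_assoc, ← diagonal_transpose, ← transpose_mul, ← hAU, transpose_mul,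
      Matrix.mul_assoc, hW, Matrix.mul_zero]
  ext i j
  simpa [hd i] using congr_fun₂ h i j

theorem exists_orthonormal_cols_mul_eq_zero {ι κ : Type*} [Fintype ι] [Fintype κ] [DecidableEq ι]
    (B : Matrix κ ι ℝ) {k : ℕ} (hk : B.rank + k = Fintype.card ι) :
    ∃ N : Matrix ι (Fin k) ℝ, Nᵀ * N = 1 ∧ B * N = 0 := by
  have hK : Module.finrank ℝ (LinearMap.ker (toEuclideanLin B)) = k := by
    have hB : Module.finrank ℝ (LinearMap.range (toEuclideanLin B)) = B.rank :=
      (rank_eq_finrank_range_toLin B (PiLp.basisFun 2 ℝ κ) (PiLp.basisFun 2 ℝ ι)).symm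
    have h := LinearMap.finrank_range_add_finrank_ker (toEuclideanLin B)
    rw [hB, finrank_euclideanSpace] at h
    omega
  let b := (stdOrthonormalBasis ℝ (LinearMap.ker (toEuclideanLin B))).reindex (finCongr hK)
  refine ⟨of fun i j => (b j : EuclideanSpace ℝ ι) i, ?_, ?_⟩
  · ext j l
    have h := orthonormal_iff_ite.mp b.orthonormal j l
    rw [Submodule.coe_inner, PiLp.inner_apply] at h
    simp only [RCLike.inner_apply, conj_trivial] at h
    simp only [mul_apply, transpose_apply, of_apply, one_apply, ← h]
    exact Finset.sum_congr rfl fun _ _ => mul_comm _ _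
  · ext i j
    have h : B *ᵥ (b j : EuclideanSpace ℝ ι) = 0 :=
      congr(WithLp.ofLp $(LinearMap.mem_ker.mp (b j).2))
    exact congr_fun h i

theorem inv_sqrt_two_smul_transpose_mul_self {ι κ : Type*} [Fintype ι] (X : Matrix ι κ ℝ) :
    ((√2)⁻¹ • X)ᵀ * ((√2)⁻¹ • X) = (2⁻¹ : ℝ) • (Xᵀ * X) := by
  rw [transpose_smul, Matrix.smul_mul, Matrix.mul_smul, smul_smul, ← mul_inv,
    Real.mul_self_sqrt zero_le_two]

section EvenOdd

variable {ι κ ν : Type*}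

def evenOddMatrix (Reven : Matrix ι κ ℝ) (R0 : Matrix ι ν ℝ) (Rodd : Matrix κ κ ℝ) :
    Matrix (ι ⊕ κ) ((κ ⊕ ν) ⊕ κ) ℝ :=
  fromRows (fromCols (fromCols Reven R0) Reven) (fromCols (fromCols Rodd 0) (-Rodd))

theorem evenOddMatrix_eq_fromCols (Reven : Matrix ι κ ℝ) (R0 : Matrix ι ν ℝ)
    (Rodd : Matrix κ κ ℝ) :
    evenOddMatrix Reven R0 Rodd =
      fromCols (fromCols (fromRows Reven Rodd) (fromRows R0 0)) (fromRows Reven (-Rodd)) := by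
  ext (i | i) ((j | j) | j) <;> rfl

variable [Fintype ι] [Fintype κ] {Reven : Matrix ι κ ℝ} {R0 : Matrix ι ν ℝ} {Rodd : Matrix κ κ ℝ}

theorem evenOddMatrix_transpose_mul_self [DecidableEq κ] [DecidableEq ν]
    (heven : Revenᵀ * Reven = (2⁻¹ : ℝ) • 1) (hodd : Roddᵀ * Rodd = (2⁻¹ : ℝ) • 1)
    (h0 : R0ᵀ * R0 = 1) (heven0 : Revenᵀ * R0 = 0) :
    (evenOddMatrix Reven R0 Rodd)ᵀ * evenOddMatrix Reven R0 Rodd = 1 := by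
  have h0even : R0ᵀ * Reven = 0 := by simpa using congrArg transpose heven0
  have hhalf : (2⁻¹ : ℝ) • (1 : Matrix κ κ ℝ) + (2⁻¹ : ℝ) • 1 = 1 := by
    rw [← add_smul]; norm_num
  rw [evenOddMatrix_eq_fromCols]
  simp only [transpose_fromCols, transpose_fromRows, fromCols_mul_fromRows, fromRows_mul,
    mul_fromCols, transpose_zero, transpose_neg, Matrix.zero_mul, Matrix.mul_zero,
    Matrix.neg_mul, Matrix.mul_neg, neg_neg, heven, hodd, h0, heven0, h0even, hhalf, add_zero,
    add_neg_cancel]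
  ext ((i | i) | i) ((j | j) | j) <;> simp [one_apply]

theorem fromBlocks_mul_evenOddMatrix [Fintype ν] [DecidableEq κ] (A : Matrix ι κ ℝ) (d : κ → ℝ)
    (heven : Aᵀ * Reven = Rodd * diagonal d) (hodd : A * Rodd = Reven * diagonal d)
    (h0 : Aᵀ * R0 = 0) :
    fromBlocks 0 A Aᵀ 0 * evenOddMatrix Reven R0 Rodd =
      evenOddMatrix Reven R0 Rodd *
        fromBlocks (fromBlocks (diagonal d) 0 0 (0 : Matrix ν ν ℝ)) 0 0 (-diagonal d) := by
  rw [evenOddMatrix_eq_fromCols]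
  simp only [mul_fromCols, fromBlocks_mul_fromRows, fromCols_mul_fromBlocks, fromRows_mul,
    Matrix.zero_mul, Matrix.mul_zero, Matrix.mul_neg, Matrix.neg_mul, heven, hodd, h0, add_zero,
    zero_add, fromRows_neg, neg_neg, neg_zero, fromRows_zero]

end EvenOdd

end Matrix

theorem MA_orthogonal_diagonalization_general (n m : ℕ)
    (A : Matrix (Fin n) (Fin m) ℝ) (hrank : A.rank = m) :
    ∃ (Reven : Matrix (Fin n) (Fin m) ℝ) (Rodd : Matrix (Fin m) (Fin m) ℝ)
      (R0 : Matrix (Fin n) (Fin (n - m)) ℝ) (d : Fin m → ℝ),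
      (∀ i, 0 < d i) ∧
      (let R : Matrix (Fin n ⊕ Fin m) ((Fin m ⊕ Fin (n - m)) ⊕ Fin m) ℝ :=
        Matrix.fromRows (Matrix.fromCols (Matrix.fromCols Reven R0) Reven)
          (Matrix.fromCols (Matrix.fromCols Rodd 0) (-Rodd))
       Rᵀ * R = 1 ∧
        MA A * R =
          R * Matrix.fromBlocks (Matrix.fromBlocks (Matrix.diagonal d) 0 0 0) 0 0
            (-(Matrix.diagonal d))) := by
  obtain ⟨V, U, d, hd, hVV, hUU, hAU, hAV⟩ :=
    exists_svd_of_rank_eq_card (A := A) (by rw [hrank, Fintype.card_fin])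
  obtain ⟨R0, hR0, hAR0⟩ := exists_orthonormal_cols_mul_eq_zero Aᵀ (k := n - m) (by
    have := A.rank_le_height
    rw [rank_transpose, Fintype.card_fin]
    omega)
  have hVR0 : Vᵀ * R0 = 0 :=
    transpose_mul_eq_zero_of_mul_eq_mul_diagonal (fun i => (hd i).ne') hAU hAR0
  refine ⟨(√2)⁻¹ • V, (√2)⁻¹ • U, R0, d, hd,
    evenOddMatrix_transpose_mul_self ?_ ?_ hR0 ?_, fromBlocks_mul_evenOddMatrix A d ?_ ?_ hAR0⟩
  · rw [inv_sqrt_two_smul_transpose_mul_self, hVV]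
  · rw [inv_sqrt_two_smul_transpose_mul_self, hUU]
  · rw [transpose_smul, Matrix.smul_mul, hVR0, smul_zero]
  · rw [Matrix.mul_smul, Matrix.smul_mul, hAV]
  · rw [Matrix.mul_smul, Matrix.smul_mul, hAU]

theorem MA_orthogonal_diagonalization (n m : ℕ) (hnm : m ≤ n)
    (A : Matrix (Fin n) (Fin m) ℝ) (hrank : A.rank = m) :
    ∃ (Reven : Matrix (Fin n) (Fin m) ℝ) (Rodd : Matrix (Fin m) (Fin m) ℝ)
      (R0 : Matrix (Fin n) (Fin (n - m)) ℝ) (d : Fin m → ℝ),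
      (∀ i, 0 < d i) ∧
      (let R : Matrix (Fin n ⊕ Fin m) ((Fin m ⊕ Fin (n - m)) ⊕ Fin m) ℝ :=
        Matrix.fromRows (Matrix.fromCols (Matrix.fromCols Reven R0) Reven)
          (Matrix.fromCols (Matrix.fromCols Rodd 0) (-Rodd))
       Rᵀ * R = 1 ∧
        MA A * R =
          R * Matrix.fromBlocks (Matrix.fromBlocks (Matrix.diagonal d) 0 0 0) 0 0
            (-(Matrix.diagonal d))) :=
  MA_orthogonal_diagonalization_general n m A hrank
end
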